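/- arXiv:2211.09226 — 2 statements merged into one kernel-verified Lean document; each statement's English description precedes it below -/
import Mathlib

section
/- No-broadcasting for the identity channel: if dim H ≥ 2, there is no quantum channel B : L(H) → L(H ⊗ H) such that both marginals equal the identity, i.e., Tr_2(B(ρ)) = ρ and Tr_1(B(ρ)) = ρ for all states ρ. Consequently, the pair of channels (id, id) is not parallelly compatible. -/
open scoped BigOperators ComplexOrder

/-- The Choi matrix of a linear map between matrix algebras. -/
def choi {α β : Type*} [Fintype α] [DecidableEq α]
    (Φ : Matrix α α ℂ →ₗ[ℂ] Matrix β β ℂ) : Matrix (β × α) (β × α) ℂ :=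
  fun p q => Φ (Matrix.single p.2 q.2 1) p.1 q.1

/-- Complete positivity, via positive semidefiniteness of the Choi matrix. -/
def IsCP {α β : Type*} [Fintype α] [DecidableEq α] [Fintype β]
    (Φ : Matrix α α ℂ →ₗ[ℂ] Matrix β β ℂ) : Prop :=
  (choi Φ).PosSemidef

/-- Partial trace over the second tensor factor. -/
noncomputable def ptr2 {n : ℕ} (M : Matrix (Fin n × Fin n) (Fin n × Fin n) ℂ) :
    Matrix (Fin n) (Fin n) ℂ :=
  fun i j => ∑ k, M (i, k) (j, k)

/-- Partial trace over the first tensor factor. -/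
noncomputable def ptr1 {n : ℕ} (M : Matrix (Fin n × Fin n) (Fin n × Fin n) ℂ) :
    Matrix (Fin n) (Fin n) ℂ :=
  fun i j => ∑ k, M (k, i) (k, j)

/-- Parallel compatibility of a pair of channels `E, F : L(ℂ^n) → L(ℂ^n)`:
there is a mother instrument (here with singleton classical outcome structure,
i.e., a channel given as a sum of CP maps) into `ℂ^n ⊗ ℂ^n` whose marginals are
`E` and `F`. -/
def ParallelCompatChanPair {n : ℕ}
    (E F : Matrix (Fin n) (Fin n) ℂ →ₗ[ℂ] Matrix (Fin n) (Fin n) ℂ) : Prop :=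
  ∃ (k : ℕ) (H : Fin k →
      (Matrix (Fin n) (Fin n) ℂ →ₗ[ℂ] Matrix (Fin n × Fin n) (Fin n × Fin n) ℂ)),
    (∀ w, IsCP (H w)) ∧ (∀ ρ, ((∑ w, H w) ρ).trace = ρ.trace) ∧
    (∀ ρ, E ρ = ptr2 ((∑ w, H w) ρ)) ∧ (∀ ρ, F ρ = ptr1 ((∑ w, H w) ρ))

/-! If `B` broadcasts the basis states `|c⟩⟨c|`, their marginal conditions force the diagonal of
`B |c⟩⟨c|` to vanish off `(c, c)`. As `|+⟩⟨+| + |-⟩⟨-| = |a⟩⟨a| + |b⟩⟨b|` and `B` is positive, the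
diagonal of `B |+⟩⟨+|` then vanishes at every `(i, j)` with `i ≠ j`. Positivity kills the
entries `((a, k), (b, k))` as well, so `Tr₂ (B |+⟩⟨+|)` has a zero `(a, b)` entry, whereas
`|+⟩⟨+|` has `1/2` there. -/

open Matrix

namespace Matrix.PosSemidef

variable {m : Type*} [Fintype m] {M : Matrix m m ℂ}

lemma apply_eq_zero_of_apply_self_eq_zero_right (hM : M.PosSemidef) {q : m} (hq : M q q = 0)
    (p : m) : M p q = 0 := by
  classical
  have hnull : star (Pi.single q 1) ⬝ᵥ (M *ᵥ Pi.single q 1) = 0 := by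
    simpa [dotProduct, mulVec, Pi.single_apply] using hq
  simpa [mulVec, dotProduct, Pi.single_apply] using
    congrFun ((hM.dotProduct_mulVec_zero_iff _).mp hnull) p

lemma apply_eq_zero_of_apply_self_eq_zero (hM : M.PosSemidef) {p q : m}
    (h : M p p = 0 ∨ M q q = 0) : M p q = 0 := by
  rcases h with hp | hq
  · rw [← hM.isHermitian.apply p q, hM.apply_eq_zero_of_apply_self_eq_zero_right hp q, star_zero]
  · exact hM.apply_eq_zero_of_apply_self_eq_zero_right hq p

end Matrix.PosSemidef

lemma map_apply_eq_sum_choi {α β : Type*} [Fintype α] [DecidableEq α]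
    (Φ : Matrix α α ℂ →ₗ[ℂ] Matrix β β ℂ) (ρ : Matrix α α ℂ) (p q : β) :
    Φ ρ p q = ∑ i, ∑ j, ρ i j * choi Φ (p, i) (q, j) := by
  conv_lhs => rw [matrix_eq_sum_single ρ]
  simp only [map_sum, Matrix.sum_apply]
  refine Finset.sum_congr rfl fun i _ => Finset.sum_congr rfl fun j _ => ?_
  rw [show single i j (ρ i j) = ρ i j • single i j 1 by rw [smul_single, smul_eq_mul, mul_one],
    map_smul]
  rfl

lemma IsCP.posSemidef_map_vecMulVec {α β : Type*} [Fintype α] [DecidableEq α] [Fintype β]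
    [DecidableEq β] {Φ : Matrix α α ℂ →ₗ[ℂ] Matrix β β ℂ} (hΦ : IsCP Φ) (v : α → ℂ) :
    (Φ (vecMulVec v (star v))).PosSemidef := by
  let V : Matrix (β × α) β ℂ := of fun x q => if x.1 = q then star (v x.2) else 0
  suffices h : Φ (vecMulVec v (star v)) = Vᴴ * choi Φ * V by
    rw [h]; exact hΦ.conjTranspose_mul_mul_same V
  ext p q
  simp only [map_apply_eq_sum_choi, vecMulVec_apply, mul_apply, conjTranspose_apply, V, of_apply,
    Finset.sum_mul, apply_ite star, star_star, star_zero, ite_mul, mul_ite, zero_mul, mul_zero,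
    Fintype.sum_prod_type, Pi.star_apply]
  simp only [Finset.sum_ite_irrel, Finset.sum_const_zero, Finset.sum_ite_eq', Finset.mem_univ,
    if_true]
  rw [Finset.sum_comm]
  refine Finset.sum_congr rfl fun i _ => Finset.sum_congr rfl fun j _ => ?_
  ring

lemma vecMulVec_add_add_vecMulVec_sub {R ι : Type*} [CommRing R] [StarRing R] (x y : ι → R) :
    vecMulVec (x + y) (star (x + y)) + vecMulVec (x - y) (star (x - y)) =
      (2 : R) • (vecMulVec x (star x) + vecMulVec y (star y)) := by
  ext i j
  simp only [Matrix.add_apply, Matrix.smul_apply, vecMulVec_apply, Pi.add_apply, Pi.sub_apply,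
    Pi.star_apply, star_add, star_sub, smul_eq_mul]
  ring

lemma IsCP.sum {α β ι : Type*} [Fintype α] [DecidableEq α] [Fintype β]
    {Φ : ι → Matrix α α ℂ →ₗ[ℂ] Matrix β β ℂ} (s : Finset ι) (hΦ : ∀ i ∈ s, IsCP (Φ i)) :
    IsCP (∑ i ∈ s, Φ i) := by
  have hchoi : choi (∑ i ∈ s, Φ i) = ∑ i ∈ s, choi (Φ i) := by
    ext p q
    simp only [choi, LinearMap.sum_apply, Matrix.sum_apply]
  rw [IsCP, hchoi]
  exact posSemidef_sum s hΦ

namespace Matrix.PosSemidef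

variable {n : ℕ} {M : Matrix (Fin n × Fin n) (Fin n × Fin n) ℂ}

lemma apply_self_eq_zero_of_ptr2 (hM : M.PosSemidef) {i : Fin n}
    (h : ptr2 M i i = 0) (j : Fin n) : M (i, j) (i, j) = 0 :=
  (Finset.sum_eq_zero_iff_of_nonneg fun _ _ => hM.diag_nonneg).mp h j (Finset.mem_univ j)

lemma apply_self_eq_zero_of_ptr1 (hM : M.PosSemidef) {j : Fin n}
    (h : ptr1 M j j = 0) (i : Fin n) : M (i, j) (i, j) = 0 :=
  (Finset.sum_eq_zero_iff_of_nonneg fun _ _ => hM.diag_nonneg).mp h i (Finset.mem_univ i)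

lemma apply_self_eq_zero_of_ptr_eq_single (hM : M.PosSemidef) {c : Fin n}
    (h2 : ptr2 M = single c c 1) (h1 : ptr1 M = single c c 1) {i j : Fin n} (hij : i ≠ j) :
    M (i, j) (i, j) = 0 := by
  by_cases hi : i = c
  · subst hi
    exact hM.apply_self_eq_zero_of_ptr1 (by rw [h1, single_apply_of_row_ne hij]) i
  · exact hM.apply_self_eq_zero_of_ptr2 (by rw [h2, single_apply_of_row_ne (Ne.symm hi)]) j

lemma isDiag_ptr2 (hM : M.PosSemidef)
    (hM0 : ∀ i j, i ≠ j → M (i, j) (i, j) = 0) : (ptr2 M).IsDiag := by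
  intro a b hab
  refine Finset.sum_eq_zero fun k _ => hM.apply_eq_zero_of_apply_self_eq_zero ?_
  obtain rfl | hak := eq_or_ne a k
  · exact Or.inr (hM0 b a (Ne.symm hab))
  · exact Or.inl (hM0 a k hak)

end Matrix.PosSemidef

theorem IsCP.card_le_one_of_broadcast {n : ℕ}
    {B : Matrix (Fin n) (Fin n) ℂ →ₗ[ℂ] Matrix (Fin n × Fin n) (Fin n × Fin n) ℂ} (hB : IsCP B)
    (hbroad : ∀ ρ : Matrix (Fin n) (Fin n) ℂ, ρ.PosSemidef → ρ.trace = 1 →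
      ptr2 (B ρ) = ρ ∧ ptr1 (B ρ) = ρ) :
    n ≤ 1 := by
  by_contra! hn
  let a : Fin n := ⟨0, by omega⟩
  let b : Fin n := ⟨1, hn⟩
  have hab : a ≠ b := by simp [a, b, Fin.ext_iff]
  let e (c : Fin n) : Fin n → ℂ := Pi.single c 1
  let ρp := (2⁻¹ : ℂ) • vecMulVec (e a + e b) (star (e a + e b))
  let ρm := (2⁻¹ : ℂ) • vecMulVec (e a - e b) (star (e a - e b))
  have he (c : Fin n) : single c c 1 = vecMulVec (e c) (star (e c)) := by
    simp only [e, single_eq_single_vecMulVec_single, Pi.star_single, star_one]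
  have hsum : B ρp + B ρm = B (single a a 1) + B (single b b 1) := by
    rw [← map_add, ← map_add, ← smul_add, vecMulVec_add_add_vecMulVec_sub, smul_smul,
      inv_mul_cancel₀ two_ne_zero, one_smul, he a, he b]
  have hρp : (B ρp).PosSemidef := by
    rw [map_smul]; exact (hB.posSemidef_map_vecMulVec _).smul (by positivity)
  have hρm : (B ρm).PosSemidef := by
    rw [map_smul]; exact (hB.posSemidef_map_vecMulVec _).smul (by positivity)
  have hbasis (c : Fin n) {i j : Fin n} (hij : i ≠ j) : B (single c c 1) (i, j) (i, j) = 0 := by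
    obtain ⟨h2, h1⟩ :=
      hbroad _ (he c ▸ posSemidef_vecMulVec_self_star (e c)) (trace_single_eq_same c 1)
    exact (he c ▸ hB.posSemidef_map_vecMulVec (e c)).apply_self_eq_zero_of_ptr_eq_single h2 h1 hij
  have hρp0 (i j : Fin n) (hij : i ≠ j) : B ρp (i, j) (i, j) = 0 := by
    have h := congrFun (congrFun hsum (i, j)) (i, j)
    rw [Matrix.add_apply, Matrix.add_apply, hbasis a hij, hbasis b hij, add_zero] at h
    exact ((add_eq_zero_iff_of_nonneg hρp.diag_nonneg hρm.diag_nonneg).mp h).1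
  obtain ⟨hmarg, -⟩ := hbroad ρp ((posSemidef_vecMulVec_self_star _).smul (by positivity))
    (by simp [ρp, e, trace_vecMulVec, dotProduct, Pi.single_apply, mul_add,
      Finset.sum_add_distrib, hab, hab.symm]; norm_num)
  have h := hρp.isDiag_ptr2 hρp0 hab
  rw [hmarg] at h
  simp [ρp, e, vecMulVec_apply, hab] at h

/-- no-broadcasting for the identity channel: for `n ≥ 2` there is no
channel `B : L(ℂ^n) → L(ℂ^n ⊗ ℂ^n)` both of whose marginals are the identity on all
states; consequently the pair `(id, id)` is not parallelly compatible. -/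
theorem stmt16 {n : ℕ} (hn : 2 ≤ n) :
    (¬ ∃ B : Matrix (Fin n) (Fin n) ℂ →ₗ[ℂ] Matrix (Fin n × Fin n) (Fin n × Fin n) ℂ,
        IsCP B ∧ (∀ ρ, (B ρ).trace = ρ.trace) ∧
        (∀ ρ : Matrix (Fin n) (Fin n) ℂ, ρ.PosSemidef → ρ.trace = 1 →
          ptr2 (B ρ) = ρ ∧ ptr1 (B ρ) = ρ)) ∧
    ¬ ParallelCompatChanPair (LinearMap.id (M := Matrix (Fin n) (Fin n) ℂ))
        (LinearMap.id (M := Matrix (Fin n) (Fin n) ℂ)) := by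
  refine ⟨fun ⟨B, hB, _, hbroad⟩ => ?_, fun ⟨k, H, hH, _, hE, hF⟩ => ?_⟩
  · have := hB.card_le_one_of_broadcast hbroad
    omega
  · have := (IsCP.sum Finset.univ fun w _ => hH w).card_le_one_of_broadcast
      fun ρ _ _ => ⟨(hE ρ).symm, (hF ρ).symm⟩
    omega
end

section
/- The pair of identity channels (id, id) on any Hilbert space is classically compatible but, when dim H ≥ 2, not parallelly compatible; while any pair of distinct channels (E, F) with E ≠ F, E, F : L(H_A) → L(H_B), is not classically compatible. Hence classical compatibility and parallel compatibility are logically independent notions for families of instruments. -/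
/-!
A channel is classically compatible with itself through the trivial post-processing of one
mother channel; conversely, with a single outcome every post-processing weight is `1`, so each
channel of a classically compatible family equals the total mother channel.

For broadcasting, let `C` be the positive semidefinite Choi matrix of `B`, indexed by
(output pair, input). If the first marginal of `B` is the identity, `C` has zero diagonal entry,
hence zero row and column, at `((m, a), i)` whenever `a ≠ i`. If the second marginal is the
identity too, applying it to `|i⟩⟨j|` with `i ≠ j` gives `∑ k, C ((i, k), i) ((j, k), j) = 1`,
yet every term of this sum lies in such a zero row or column.
-/

open scoped BigOperators ComplexOrder

/-- Classical compatibility of a family of instruments. -/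
def InstrClasCompat {n m : ℕ} {I X : Type} [Fintype I] [Fintype X]
    (J : I → X → (Matrix (Fin n) (Fin n) ℂ →ₗ[ℂ] Matrix (Fin m) (Fin m) ℂ)) : Prop :=
  ∃ (k : ℕ) (H : Fin k → (Matrix (Fin n) (Fin n) ℂ →ₗ[ℂ] Matrix (Fin m) (Fin m) ℂ))
    (μ : X → Fin k → I → ℝ),
    (∀ w, IsCP (H w)) ∧ (∀ ρ, ((∑ w, H w) ρ).trace = ρ.trace) ∧
    (∀ x w i, 0 ≤ μ x w i) ∧ (∀ w i, (∑ x, μ x w i) = 1) ∧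
    (∀ i x, J i x = ∑ w, (μ x w i : ℂ) • H w)

namespace Matrix.PosSemidef

variable {𝕜 ι : Type*} [RCLike 𝕜] [Fintype ι] [DecidableEq ι] {M : Matrix ι ι 𝕜}

lemma apply_eq_zero_of_diag_eq_zero_right (hM : M.PosSemidef) {q : ι} (hq : M q q = 0)
    (p : ι) : M p q = 0 := by
  have hcol : M *ᵥ Pi.single q 1 = 0 :=
    (hM.dotProduct_mulVec_zero_iff _).mp (by simpa using hq)
  simpa using congrFun hcol p

lemma apply_eq_zero_of_diag_eq_zero_left (hM : M.PosSemidef) {p : ι} (hp : M p p = 0)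
    (q : ι) : M p q = 0 := by
  rw [← hM.1.apply, hM.apply_eq_zero_of_diag_eq_zero_right hp q, star_zero]

end Matrix.PosSemidef

section Choi

variable {α β κ : Type*} [Fintype α] [DecidableEq α] [Fintype κ]

lemma choi_sum (H : κ → (Matrix α α ℂ →ₗ[ℂ] Matrix β β ℂ)) :
    choi (∑ w, H w) = ∑ w, choi (H w) := by
  ext p q
  simp [choi, LinearMap.sum_apply, Matrix.sum_apply]

lemma isCP_sum [Fintype β] {H : κ → (Matrix α α ℂ →ₗ[ℂ] Matrix β β ℂ)} (hH : ∀ w, IsCP (H w)) :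
    IsCP (∑ w, H w) := by
  rw [IsCP, choi_sum]
  exact Matrix.posSemidef_sum _ fun w _ => hH w

lemma choi_id : choi (LinearMap.id : Matrix α α ℂ →ₗ[ℂ] Matrix α α ℂ) =
    Matrix.vecMulVec (fun p : α × α => if p.1 = p.2 then 1 else 0)
      (star fun p : α × α => if p.1 = p.2 then 1 else 0) := by
  ext p q
  simp only [choi, LinearMap.id_apply, Matrix.single_apply, Matrix.vecMulVec_apply, Pi.star_apply]
  split_ifs <;> simp_all

lemma isCP_id : IsCP (LinearMap.id : Matrix α α ℂ →ₗ[ℂ] Matrix α α ℂ) := by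
  rw [IsCP, choi_id]
  exact Matrix.posSemidef_vecMulVec_self_star _

end Choi

section ClassicalCompatibility

variable {n m : ℕ} {I : Type} [Fintype I]

lemma instrClasCompat_const {Φ : Matrix (Fin n) (Fin n) ℂ →ₗ[ℂ] Matrix (Fin m) (Fin m) ℂ}
    (hCP : IsCP Φ) (hTP : ∀ ρ, (Φ ρ).trace = ρ.trace) :
    InstrClasCompat (fun (_ : I) (_ : Unit) => Φ) :=
  ⟨1, fun _ => Φ, fun _ _ _ => 1, fun _ => hCP, by simpa using hTP, fun _ _ _ => zero_le_one,
    fun _ _ => by simp, fun _ _ => by simp⟩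

lemma InstrClasCompat.eq_of_unit
    {J : I → Unit → (Matrix (Fin n) (Fin n) ℂ →ₗ[ℂ] Matrix (Fin m) (Fin m) ℂ)}
    (h : InstrClasCompat J) (i j : I) : J i () = J j () := by
  obtain ⟨k, H, μ, -, -, -, hμ, hJ⟩ := h
  have hμ_one : ∀ w i, μ () w i = 1 := fun w i => by simpa using hμ w i
  simp only [hJ, hμ_one, Complex.ofReal_one, one_smul]

end ClassicalCompatibility

section Broadcasting

variable {n : ℕ} {B : Matrix (Fin n) (Fin n) ℂ →ₗ[ℂ] Matrix (Fin n × Fin n) (Fin n × Fin n) ℂ}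

lemma choi_diag_eq_zero_of_ptr1 (hB : IsCP B) (h₁ : ∀ ρ, ptr1 (B ρ) = ρ) {a i : Fin n}
    (hai : a ≠ i) (m : Fin n) : choi B ((m, a), i) ((m, a), i) = 0 := by
  have hsum : ∑ m', choi B ((m', a), i) ((m', a), i) = 0 := by
    simpa [ptr1, choi, Matrix.single_apply, hai.symm, eq_comm] using
      congrFun (congrFun (h₁ (Matrix.single i i 1)) a) a
  exact (Finset.sum_eq_zero_iff_of_nonneg fun m' _ => hB.diag_nonneg).mp hsum m
    (Finset.mem_univ m)

theorem no_broadcasting (hn : 2 ≤ n) (hB : IsCP B) (h₂ : ∀ ρ, ptr2 (B ρ) = ρ) :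
    ¬ ∀ ρ, ptr1 (B ρ) = ρ := by
  intro h₁
  obtain ⟨i, j, hij⟩ := (Fin.nontrivial_iff_two_le.mpr hn).exists_pair_ne
  have hone : ∑ k, choi B ((i, k), i) ((j, k), j) = 1 := by
    simpa [ptr2, choi, Matrix.single_apply] using
      (congrFun (congrFun (h₂ (Matrix.single i j 1)) i) j)
  -- The `k = j` term sits in a zero row, every other term in a zero column.
  have hzero : ∀ k, choi B ((i, k), i) ((j, k), j) = 0 := by
    intro k
    by_cases hk : k = j
    · subst hk
      exact hB.apply_eq_zero_of_diag_eq_zero_left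
        (choi_diag_eq_zero_of_ptr1 hB h₁ hij.symm i) _
    · exact hB.apply_eq_zero_of_diag_eq_zero_right (choi_diag_eq_zero_of_ptr1 hB h₁ hk j) _
  simp [hzero] at hone

theorem not_parallelCompatChanPair_id (hn : 2 ≤ n) :
    ¬ ParallelCompatChanPair (LinearMap.id (M := Matrix (Fin n) (Fin n) ℂ))
      (LinearMap.id (M := Matrix (Fin n) (Fin n) ℂ)) := by
  rintro ⟨k, H, hCP, -, h₂, h₁⟩
  exact no_broadcasting hn (isCP_sum hCP) (fun ρ => (h₂ ρ).symm) (fun ρ => (h₁ ρ).symm)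

end Broadcasting

theorem stmt17_general {n a b : ℕ}
    (E F : Matrix (Fin a) (Fin a) ℂ →ₗ[ℂ] Matrix (Fin b) (Fin b) ℂ)
    (hne : E ≠ F) :
    InstrClasCompat (fun (_ : Fin 2) (_ : Unit) =>
        (LinearMap.id : Matrix (Fin n) (Fin n) ℂ →ₗ[ℂ] Matrix (Fin n) (Fin n) ℂ)) ∧
    (2 ≤ n → ¬ ParallelCompatChanPair
        (LinearMap.id (M := Matrix (Fin n) (Fin n) ℂ))
        (LinearMap.id (M := Matrix (Fin n) (Fin n) ℂ))) ∧
    ¬ InstrClasCompat (fun (i : Fin 2) (_ : Unit) => if i = 0 then E else F) :=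
  ⟨instrClasCompat_const isCP_id fun _ => rfl, not_parallelCompatChanPair_id,
    fun h => hne (by simpa using h.eq_of_unit 0 1)⟩

/-- the pair `(id, id)` is classically compatible but (for `dim ≥ 2`) not
parallelly compatible, while any pair of distinct channels is not classically
compatible: classical and parallel compatibility are logically independent. -/
theorem stmt17 {n a b : ℕ}
    (E F : Matrix (Fin a) (Fin a) ℂ →ₗ[ℂ] Matrix (Fin b) (Fin b) ℂ)
    (hE : IsCP E ∧ ∀ ρ, (E ρ).trace = ρ.trace)
    (hF : IsCP F ∧ ∀ ρ, (F ρ).trace = ρ.trace)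
    (hne : E ≠ F) :
    InstrClasCompat (fun (_ : Fin 2) (_ : Unit) =>
        (LinearMap.id : Matrix (Fin n) (Fin n) ℂ →ₗ[ℂ] Matrix (Fin n) (Fin n) ℂ)) ∧
    (2 ≤ n → ¬ ParallelCompatChanPair
        (LinearMap.id (M := Matrix (Fin n) (Fin n) ℂ))
        (LinearMap.id (M := Matrix (Fin n) (Fin n) ℂ))) ∧
    ¬ InstrClasCompat (fun (i : Fin 2) (_ : Unit) => if i = 0 then E else F) :=
  stmt17_general E F hne
end
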